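/- Let (X,κ) be a digital image and let D ⊂ X. Let 𝒟 = { A ∈ 2^X : A ∩ D ≠ ∅ }. Then D dominates (X,κ) (for every x ∈ X there exists d ∈ D with d ⟷≤_κ x) if and only if 𝒟 dominates (2^X,κ') (for every A ∈ 2^X there exists B ∈ 𝒟 with B ⟷≤_{κ'} A). -/

import Mathlib

/-- `a` and `b` are adjacent or equal ("⟷≤") with respect to adjacency relation `α`. -/
def AdjEq {A : Type*} (α : A → A → Prop) (a b : A) : Prop := α a b ∨ a = b

/-- `f : (X,κ) → (Y,lam)` is digitally continuous: adjacency is sent to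
adjacency-or-equality. -/
def DigCont {X Y : Type*} (κ : X → X → Prop) (lam : Y → Y → Prop) (f : X → Y) : Prop :=
  ∀ x x', κ x x' → AdjEq lam (f x) (f x')

/-- Continuity of `f` relative to carrier sets: `f` maps `S` into `T` and sends
`α`-adjacent elements of `S` to `β`-adjacent-or-equal elements. -/
def ContOn {A B : Type*} (α : A → A → Prop) (β : B → B → Prop)
    (S : Set A) (T : Set B) (f : A → B) : Prop :=
  (∀ a ∈ S, f a ∈ T) ∧ ∀ a ∈ S, ∀ a' ∈ S, α a a' → AdjEq β (f a) (f a')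

/-- The hyperspace adjacency `κ'`: distinct `A, B` are adjacent iff every point of `A`
is adjacent-or-equal to some point of `B` and vice versa. -/
def HyperAdj {X : Type*} (κ : X → X → Prop) (A B : Finset X) : Prop :=
  A ≠ B ∧ (∀ a ∈ A, ∃ b ∈ B, AdjEq κ a b) ∧ ∀ b ∈ B, ∃ a ∈ A, AdjEq κ b a

/-- A subset `S` is connected w.r.t. adjacency `α`: any two of its points are joined by
a path (finite sequence of consecutively adjacent-or-equal points) lying in `S`. -/
def ConnIn {A : Type*} (α : A → A → Prop) (S : Set A) : Prop :=
  ∀ a ∈ S, ∀ b ∈ S, ∃ (n : ℕ) (p : ℕ → A), p 0 = a ∧ p n = b ∧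
    (∀ i ≤ n, p i ∈ S) ∧ ∀ i < n, AdjEq α (p i) (p (i + 1))

/-- `a` and `b` are joined by a path lying in `S` (i.e. they are in the same
connected component of the graph induced on `S`). -/
def Chain {A : Type*} (α : A → A → Prop) (S : Set A) (a b : A) : Prop :=
  ∃ (n : ℕ) (p : ℕ → A), p 0 = a ∧ p n = b ∧
    (∀ i ≤ n, p i ∈ S) ∧ ∀ i < n, AdjEq α (p i) (p (i + 1))

/-- The carrier of the hyperspace `2^X`: nonempty finite subsets of `X`. -/
def TwoX (X : Type*) : Set (Finset X) := {A | A.Nonempty}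

/-- The carrier of `K(X,κ')`: nonempty finite κ-connected subsets of `X`. -/
def KSet {X : Type*} (κ : X → X → Prop) : Set (Finset X) :=
  {A | A.Nonempty ∧ ConnIn κ (A : Set X)}

/-- A digital homotopy from `f` to `g`, relative to carriers `S`, `T`:
a function `F : S × [0,m] → T` with `F(·,0) = f`, `F(·,m) = g`, all tracks
`t ↦ F(a,t)` are paths, and all time slices `a ↦ F(a,t)` are continuous. -/
def HtpyOn {A B : Type*} (α : A → A → Prop) (β : B → B → Prop)
    (S : Set A) (T : Set B) (f g : A → B) : Prop :=
  ∃ (m : ℕ) (F : A → ℕ → B),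
    (∀ a ∈ S, ∀ t ≤ m, F a t ∈ T) ∧
    (∀ a ∈ S, F a 0 = f a) ∧ (∀ a ∈ S, F a m = g a) ∧
    (∀ a ∈ S, ∀ t < m, AdjEq β (F a t) (F a (t + 1))) ∧
    (∀ t ≤ m, ∀ a ∈ S, ∀ a' ∈ S, α a a' → AdjEq β (F a t) (F a' t))

/-- A digital homotopy from `f` to `g` in exactly `m` steps (on full types). -/
def HtpyN {X Y : Type*} (κ : X → X → Prop) (lam : Y → Y → Prop)
    (f g : X → Y) (m : ℕ) : Prop :=
  ∃ F : X → ℕ → Y,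
    (∀ x, F x 0 = f x) ∧ (∀ x, F x m = g x) ∧
    (∀ x, ∀ t < m, AdjEq lam (F x t) (F x (t + 1))) ∧
    (∀ t ≤ m, DigCont κ lam fun x => F x t)

/-- `f` and `g` are digitally homotopic. -/
def Htpy {X Y : Type*} (κ : X → X → Prop) (lam : Y → Y → Prop) (f g : X → Y) : Prop :=
  ∃ m, HtpyN κ lam f g m

/-- The graphs on carriers `S` and `T` have the same homotopy type. -/
def HtpyEquivOn {A B : Type*} (α : A → A → Prop) (β : B → B → Prop)
    (S : Set A) (T : Set B) : Prop :=
  ∃ (f : A → B) (g : B → A),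
    ContOn α β S T f ∧ ContOn β α T S g ∧
    HtpyOn α α S S (g ∘ f) id ∧ HtpyOn β β T T (f ∘ g) id

/-- The graph on carrier `S` is contractible: the identity is homotopic to a constant. -/
def ContractibleOn {A : Type*} (α : A → A → Prop) (S : Set A) : Prop :=
  ∃ c ∈ S, HtpyOn α α S S id fun _ => c

/-- `Φ`-adjacency of functions: `f ≠ g` and `f(x) ⟷≤ g(x)` for all `x`. -/
def PhiAdj {X Y : Type*} (lam : Y → Y → Prop) (f g : X → Y) : Prop :=
  f ≠ g ∧ ∀ x, AdjEq lam (f x) (g x)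

/-- `Ψ`-adjacency of functions: `f ≠ g` and `x₀ ⟷≤ x₁` implies `f(x₀) ⟷≤ g(x₁)`. -/
def PsiAdj {X Y : Type*} (κ : X → X → Prop) (lam : Y → Y → Prop) (f g : X → Y) : Prop :=
  f ≠ g ∧ ∀ x₀ x₁, AdjEq κ x₀ x₁ → AdjEq lam (f x₀) (g x₁)

/-- `C` is a connected component of the graph induced on the vertex set `V`:
a maximal connected subset of `V`. -/
def IsComponentIn {A : Type*} (α : A → A → Prop) (V C : Set A) : Prop :=
  C ⊆ V ∧ ConnIn α C ∧ ∀ C' : Set A, C' ⊆ V → ConnIn α C' → C ⊆ C' → C' = C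

/-!
Choosing for each point a neighbour in `D` and taking the image of `A` under this choice
gives a member of `𝒟` that is `κ'`-adjacent or equal to `A`. Conversely, a member of `𝒟`
near the singleton `{x}` contains a point of `D`, and every point of it is near `x`.
-/

theorem AdjEq.symm {A : Type*} {α : A → A → Prop} (hα : ∀ a b, α a b → α b a) {a b : A}
    (h : AdjEq α a b) : AdjEq α b a :=
  h.imp (hα a b) Eq.symm

theorem adjEq_hyperAdj_image {X : Type*} [DecidableEq X] {κ : X → X → Prop}
    (hκ : ∀ x y, κ x y → κ y x) (A : Finset X) {f : X → X} (hf : ∀ a ∈ A, AdjEq κ (f a) a) :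
    AdjEq (HyperAdj κ) (A.image f) A := by
  by_cases hfA : A.image f = A
  · exact Or.inr hfA
  refine Or.inl ⟨hfA, ?_, fun a ha => ⟨f a, Finset.mem_image_of_mem f ha, (hf a ha).symm hκ⟩⟩
  rintro _ hb
  obtain ⟨a, ha, rfl⟩ := Finset.mem_image.mp hb
  exact ⟨a, ha, hf a ha⟩

theorem AdjEq.of_hyperAdj_singleton {X : Type*} {κ : X → X → Prop} {B : Finset X} {x b : X}
    (h : AdjEq (HyperAdj κ) B {x}) (hb : b ∈ B) : AdjEq κ b x := by
  rcases h with ⟨-, hB, -⟩ | rfl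
  · obtain ⟨y, hy, hby⟩ := hB b hb
    rwa [Finset.mem_singleton.mp hy] at hby
  · exact Or.inr (Finset.mem_singleton.mp hb)

theorem stmt19_general {X : Type*}
    (κ : X → X → Prop)
    (hκsymm : ∀ x y, κ x y → κ y x)
    (D : Set X) :
    (∀ x : X, ∃ d ∈ D, AdjEq κ d x) ↔
    (∀ A ∈ TwoX X, ∃ B ∈ {A | A ∈ TwoX X ∧ ((A : Set X) ∩ D).Nonempty},
      AdjEq (HyperAdj κ) B A) := by
  classical
  constructor
  · intro hD A hA
    choose f hfD hf using hD
    obtain ⟨a, ha⟩ := hA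
    have hfa : f a ∈ A.image f := Finset.mem_image_of_mem f ha
    exact ⟨A.image f, ⟨⟨f a, hfa⟩, f a, hfa, hfD a⟩,
      adjEq_hyperAdj_image hκsymm A fun a _ => hf a⟩
  · intro h𝒟 x
    obtain ⟨B, ⟨-, d, hdB, hdD⟩, hBx⟩ := h𝒟 {x} (Finset.singleton_nonempty x)
    exact ⟨d, hdD, hBx.of_hyperAdj_singleton hdB⟩

/-- `D` dominates `(X,κ)` iff `𝒟 = {A ∈ 2^X : A ∩ D ≠ ∅}` dominates
`(2^X,κ')`. -/
theorem stmt19 {X : Type*}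
    (κ : X → X → Prop)
    (hκsymm : ∀ x y, κ x y → κ y x) (hκirr : ∀ x, ¬ κ x x)
    (D : Set X) :
    (∀ x : X, ∃ d ∈ D, AdjEq κ d x) ↔
    (∀ A ∈ TwoX X, ∃ B ∈ {A | A ∈ TwoX X ∧ ((A : Set X) ∩ D).Nonempty},
      AdjEq (HyperAdj κ) B A) :=
  stmt19_general κ hκsymm D
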